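/- arXiv:2406.15263 — 2 statements merged into one kernel-verified Lean document; each statement's English description precedes it below -/
import Mathlib

section
/- Let λ be an infinite cardinal with λ⁺ < 2^λ. Then there exists a tree T with at most λ nodes and at most λ levels (i.e., of height κ ≤ λ) that has at least λ⁺⁺ branches of length equal to its height. -/
/-!
Let `ν ≤ λ` be least with `λ⁺⁺ ≤ 2^ν`, so every sequence of length `j < ν` lives in a set of
size `2^|j| ≤ λ⁺` and can be coded injectively by an ordinal below `λ⁺`. Since `λ⁺` is regular
and `ν ≤ λ`, the codes of the initial segments of any `η : ν → 2` are bounded below `λ⁺`, and by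
pigeonhole `λ⁺⁺` of the `2^ν` branches share a bound `w`. The initial segments of these branches
form a tree whose nodes are determined by their level and their code, hence it has at most
`|ν| · |w| ≤ λ` nodes.
-/

universe u

open Cardinal Set

namespace Cardinal

theorem exists_minimal_le_two_power {μ lam : Cardinal.{u}} (h : μ ≤ 2 ^ lam) :
    ∃ ν ≤ lam, μ ≤ 2 ^ ν ∧ ∀ σ < ν, 2 ^ σ < μ := by
  have hne : {c : Cardinal.{u} | μ ≤ 2 ^ c}.Nonempty := ⟨lam, h⟩
  refine ⟨sInf {c | μ ≤ 2 ^ c}, csInf_le' h, csInf_mem hne, fun σ hσ => ?_⟩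
  exact not_le.1 (notMem_of_lt_csInf' (s := {c | μ ≤ 2 ^ c}) hσ)

theorem mk_bool_arrow (α : Type u) : #(α → Bool) = 2 ^ #α := by
  rw [mk_arrow, mk_bool, lift_two, lift_uzero]

end Cardinal

theorem exists_forall_lt_of_mk_lt_cof {ι α : Type u} [LinearOrder α] (f : ι → α)
    (h : #ι < Order.cof α) : ∃ a, ∀ i, f i < a := by
  by_contra! hf
  have hcof : IsCofinal (range f) := fun a =>
    let ⟨i, hi⟩ := hf a
    ⟨f i, mem_range_self i, hi⟩
  exact ((Order.cof_le hcof).trans mk_range_le).not_gt h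

section Trees

variable {α : Type u} [Preorder α]

def nodeAt (η : α → Bool) (i : α) : (i : α) × (Iio i → Bool) :=
  ⟨i, fun x => η x⟩

def restrictionTree (B : Set (α → Bool)) : Set ((i : α) × (Iio i → Bool)) :=
  ⋃ η ∈ B, range (nodeAt η)

theorem nodeAt_mem_restrictionTree {B : Set (α → Bool)} {η : α → Bool} (hη : η ∈ B) (i : α) :
    nodeAt η i ∈ restrictionTree B :=
  mem_biUnion hη (mem_range_self i)

theorem restrictionTree_closed {B : Set (α → Bool)} :
    ∀ s ∈ restrictionTree B, ∀ j, ∀ hj : j < s.1,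
      (⟨j, fun x => s.2 ⟨x.1, x.2.trans hj⟩⟩ : (i : α) × (Iio i → Bool)) ∈ restrictionTree B := by
  simp only [restrictionTree, mem_iUnion, mem_range]
  rintro _ ⟨η, hη, i, rfl⟩ j _
  exact ⟨η, hη, j, rfl⟩

theorem mk_restrictionTree_le {β : Type u} {B : Set (α → Bool)}
    (e : ∀ i : α, (Iio i → Bool) ↪ β) {S : Set β} (hS : ∀ η ∈ B, ∀ i, e i (nodeAt η i).2 ∈ S) :
    #(restrictionTree B) ≤ #α * #S := by
  have hmem : ∀ s ∈ restrictionTree B, e s.1 s.2 ∈ S := by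
    simp only [restrictionTree, mem_iUnion, mem_range]
    rintro _ ⟨η, hη, i, rfl⟩
    exact hS η hη i
  let f : restrictionTree B → α × S := fun s => (s.1.1, ⟨e s.1.1 s.1.2, hmem s.1 s.2⟩)
  have hf : Function.Injective f := by
    rintro ⟨⟨i, x⟩, _⟩ ⟨⟨i', x'⟩, _⟩ h
    simp only [f, Prod.mk.injEq, Subtype.mk.injEq] at h
    obtain ⟨rfl, h⟩ := h
    cases (e i).injective h
    rfl
  simpa only [mk_prod, lift_id] using mk_le_of_injective hf

end Trees

theorem exists_many_branches_with_codes_lt {α β : Type u} [Preorder α] [LinearOrder β]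
    (e : ∀ i : α, (Iio i → Bool) ↪ β) (hα : #α < Order.cof β) {θ : Cardinal.{u}}
    (hθ : θ ≤ 2 ^ #α) (hθ₀ : ℵ₀ ≤ θ) (hβ : #β < θ.ord.cof) :
    ∃ w : β, θ ≤ #{η : α → Bool | ∀ i, e i (nodeAt η i).2 < w} := by
  choose bound hbound using fun η : α → Bool =>
    exists_forall_lt_of_mk_lt_cof (fun i => e i (nodeAt η i).2) hα
  obtain ⟨w, hw⟩ := infinite_pigeonhole_card bound θ (by rwa [mk_bool_arrow]) hθ₀ hβ
  exact ⟨w, hw.trans (mk_le_mk_of_subset fun η (hη : bound η = w) i => hη ▸ hbound η i)⟩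

/-- If `λ` is infinite and `λ⁺ < 2^λ`, then there is a cardinal `κ ≤ λ` and a
tree `T` of binary sequences of length `< κ` (closed under initial segments) with at most `λ`
nodes that has at least `λ⁺⁺` branches of length `κ`. -/
theorem stmt0 (lam : Cardinal.{u}) (hinf : ℵ₀ ≤ lam)
    (hlt : Order.succ lam < 2 ^ lam) :
    ∃ κ : Cardinal.{u}, κ ≤ lam ∧
      ∃ T : Set ((i : κ.ord.ToType) × (Set.Iio i → Bool)),
        #↥T ≤ lam ∧
        (∀ s ∈ T, ∀ j, ∀ hj : j < s.1,
          (⟨j, fun x => s.2 ⟨x.1, x.2.trans hj⟩⟩ : (i : κ.ord.ToType) × (Set.Iio i → Bool)) ∈ T) ∧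
        Order.succ (Order.succ lam) ≤
          #{η : κ.ord.ToType → Bool |
            ∀ i, (⟨i, fun x => η x.1⟩ : (i : κ.ord.ToType) × (Set.Iio i → Bool)) ∈ T} := by
  obtain ⟨ν, hνlam, hν, hsmall⟩ := exists_minimal_le_two_power (Order.succ_le_of_lt hlt)
  have hreg := isRegular_succ hinf
  have hreg₂ := isRegular_succ (hinf.trans (Order.le_succ lam))
  have card_Iio_lt {c : Cardinal.{u}} (i : c.ord.ToType) : #(Iio i) < c := by
    simpa using mk_Iio_lt i
  have hcodes (j : ν.ord.ToType) : #(Iio j → Bool) ≤ #(Order.succ lam).ord.ToType := by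
    rw [mk_bool_arrow, mk_ord_toType, ← Order.lt_succ_iff]
    exact hsmall _ (card_Iio_lt j)
  let e j : (Iio j → Bool) ↪ (Order.succ lam).ord.ToType := ((le_def _ _).1 (hcodes j)).some
  obtain ⟨w, hw⟩ := exists_many_branches_with_codes_lt e
    (by rwa [mk_ord_toType, Ordinal.cof_toType, hreg.cof_ord, Order.lt_succ_iff])
    (by rwa [mk_ord_toType]) hreg₂.aleph0_le
    (by rw [mk_ord_toType, hreg₂.cof_ord]; exact Order.lt_succ _)
  refine ⟨ν, hνlam, restrictionTree _, ?_, restrictionTree_closed,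
    hw.trans (mk_le_mk_of_subset fun η hη => nodeAt_mem_restrictionTree hη)⟩
  calc #(restrictionTree _) ≤ #ν.ord.ToType * #(Iio w) := mk_restrictionTree_le e fun η hη => hη
    _ ≤ lam * lam := by
      rw [mk_ord_toType]
      exact mul_le_mul' hνlam (Order.lt_succ_iff.1 (card_Iio_lt w))
    _ = lam := mul_eq_self hinf
end

section
/- Suppose Φ²_{λ⁺}(λ⁺) holds for an infinite cardinal λ. Then there exist pairwise disjoint stationary sets S_α ⊆ λ⁺ for α < λ⁺ such that Φ²_{λ⁺}(S_α) holds for every α < λ⁺. -/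
universe u

open Cardinal

namespace WD

/-- `C` is closed and unbounded in the ordinal `Λ`. -/
def ClubIn (C : Set Ordinal.{u}) (Λ : Ordinal.{u}) : Prop :=
  (∀ x ∈ C, x < Λ) ∧
  (∀ α < Λ, ∃ β ∈ C, α ≤ β) ∧
  (∀ S : Set Ordinal.{u}, S ⊆ C → S.Nonempty → BddAbove S → sSup S < Λ → sSup S ∈ C)

/-- `S` is stationary in the ordinal `Λ`: it meets every club of `Λ`. -/
def StatIn (S : Set Ordinal.{u}) (Λ : Ordinal.{u}) : Prop :=
  ∀ C : Set Ordinal.{u}, ClubIn C Λ → (S ∩ C).Nonempty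

/-- The ordinals below `λ⁺`. -/
def Tower (lam : Cardinal.{u}) : Type (u + 1) :=
  {α : Ordinal.{u} // α < (Order.succ lam).ord}

/-- A set of size `2^λ` (realized as the ordinals below `(2^λ).ord`). -/
def Target (lam : Cardinal.{u}) : Type (u + 1) :=
  {β : Ordinal.{u} // β < ((2 : Cardinal.{u}) ^ lam).ord}

/-- The elements of `^{<λ⁺}(2^λ)`: functions from a proper initial segment of `λ⁺`
into `2^λ`. -/
def PSeq (lam : Cardinal.{u}) : Type (u + 1) :=
  (α : Tower lam) × ({β : Ordinal.{u} // β < α.1} → Target lam)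

/-- The restriction `f ↾ α` of `f : λ⁺ → 2^λ` to `α < λ⁺`. -/
def restr (lam : Cardinal.{u}) (f : Tower lam → Target lam) (α : Tower lam) : PSeq lam :=
  ⟨α, fun β => f ⟨β.1, β.2.trans α.2⟩⟩

/-- The weak diamond principle `Φ^k_{λ⁺}(S)` of Devlin–Shelah: for every
`F : ^{<λ⁺}(2^λ) → k` there is `g : λ⁺ → k` such that for every `f : λ⁺ → 2^λ` the set
`{α ∈ S : F(f ↾ α) = g(α)}` is stationary in `λ⁺`. -/
def WeakDiamond (lam : Cardinal.{u}) (k : ℕ) (S : Set Ordinal.{u}) : Prop :=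
  ∀ F : PSeq lam → Fin k, ∃ g : Tower lam → Fin k,
    ∀ f : Tower lam → Target lam,
      StatIn {α : Ordinal.{u} | ∃ hα : α < (Order.succ lam).ord,
          α ∈ S ∧ F (restr lam f ⟨α, hα⟩) = g ⟨α, hα⟩}
        (Order.succ lam).ord

end WD

/-! The sets `S ⊆ λ⁺` on which `Φ²_{λ⁺}(S)` fails form an ideal that contains the
nonstationary sets and is closed under unions of `λ` sets: counterexamples `f_i` for `λ` pieces
are coded into a single `f : λ⁺ → 2^λ` because `(2^λ)^λ = 2^λ`, and `λ` clubs of the regular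
cardinal `λ⁺` meet in a club. Take an Ulam matrix `A ξ α` (`ξ < λ`, `α < λ⁺`): row `α` is a
partition of the tail `(α, λ⁺)`, on which `Φ²` holds, so some cell `A ξ(α) α` is positive.
By pigeonhole, `λ⁺` many rows `α` share one `ξ₀`, and the cells of column `ξ₀` are pairwise
disjoint. -/

open Set Function

namespace WD

section Clubs

variable {Λ : Ordinal.{u}}

lemma clubIn_Iio : ClubIn (Iio Λ) Λ :=
  ⟨fun _ hx => hx, fun α hα => ⟨α, hα, le_rfl⟩, fun _ _ _ _ hlt => hlt⟩

lemma StatIn.nonempty {S : Set Ordinal.{u}} (hS : StatIn S Λ) : S.Nonempty :=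
  (hS _ clubIn_Iio).imp fun _ hx => hx.1

lemma StatIn.mono {S T : Set Ordinal.{u}} (h : S ⊆ T) (hS : StatIn S Λ) : StatIn T Λ :=
  fun C hC => (hS C hC).imp fun _ hx => ⟨h hx.1, hx.2⟩

lemma clubIn_Ioo (hΛ : Order.IsSuccLimit Λ) {α : Ordinal.{u}} (hα : α < Λ) :
    ClubIn (Ioo α Λ) Λ := by
  refine ⟨fun _ hx => hx.2, fun γ hγ => ?_, fun S hS ⟨x, hx⟩ hbdd hlt => ?_⟩
  · exact ⟨max γ (Order.succ α), ⟨(Order.lt_succ α).trans_le (le_max_right _ _),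
      max_lt hγ (hΛ.succ_lt hα)⟩, le_max_left _ _⟩
  · exact ⟨(hS hx).1.trans_le (le_csSup hbdd hx), hlt⟩

lemma clubIn_iInter {ι : Type u} [Nonempty ι] {C : ι → Set Ordinal.{u}}
    (hΛ : ℵ₀ < Λ.cof) (hι : #ι < Λ.cof) (hC : ∀ i, ClubIn (C i) Λ) :
    ClubIn (⋂ i, C i) Λ := by
  refine ⟨fun x hx => (hC (Classical.arbitrary ι)).1 x (mem_iInter.1 hx _), ?_,
    fun S hS hne hbdd hlt => mem_iInter.2 fun i =>
      (hC i).2.2 S (fun x hx => mem_iInter.1 (hS hx) i) hne hbdd hlt⟩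
  have hstep : ∀ γ, ∃ γ', γ < Λ → γ' < Λ ∧ ∀ i, ∃ c ∈ C i, γ ≤ c ∧ c ≤ γ' := by
    intro γ
    by_cases hγ : γ < Λ
    · choose c hcC hγc using fun i => (hC i).2.1 γ hγ
      exact ⟨⨆ i, c i, fun _ => ⟨Ordinal.iSup_lt_of_lt_cof hι fun i => (hC i).1 _ (hcC i),
        fun i => ⟨c i, hcC i, hγc i, le_ciSup Ordinal.bddAbove_of_small i⟩⟩⟩
    · exact ⟨0, fun h => absurd h hγ⟩
  choose next hnext using hstep
  intro α hα
  have hseq : ∀ n, next^[n] α < Λ := by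
    intro n
    induction n with
    | zero => exact hα
    | succ n ih => rw [iterate_succ_apply']; exact (hnext _ ih).1
  have hδ : ⨆ n, next^[n] α < Λ :=
    Ordinal.lift_iSup_lt_of_lt_cof (by simpa using hΛ) hseq
  refine ⟨⨆ n, next^[n] α, mem_iInter.2 fun i => ?_,
    le_ciSup Ordinal.bddAbove_of_small 0⟩
  -- the supremum is also that of points of `C i`, one between any two consecutive terms
  choose c hcC hc using fun n => (hnext _ (hseq n)).2 i
  have hsup : ⨆ n, c n = ⨆ n, next^[n] α := by
    refine le_antisymm (ciSup_le fun n => (hc n).2.trans ?_)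
      (ciSup_mono Ordinal.bddAbove_of_small fun n => (hc n).1)
    rw [← iterate_succ_apply' next]
    exact le_ciSup Ordinal.bddAbove_of_small (n + 1)
  rw [← hsup]
  exact (hC i).2.2 _ (range_subset_iff.2 hcC) (range_nonempty _) Ordinal.bddAbove_of_small
    (hsup.trans_lt hδ)

lemma StatIn.exists_of_iUnion {ι : Type u} {B : ι → Set Ordinal.{u}}
    (hΛ : ℵ₀ < Λ.cof) (hι : #ι < Λ.cof) (hB : StatIn (⋃ i, B i) Λ) :
    ∃ i, StatIn (B i) Λ := by
  by_contra! hno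
  obtain ⟨x, hx⟩ := hB.nonempty
  have : Nonempty ι := ⟨(mem_iUnion.1 hx).choose⟩
  simp only [StatIn, not_forall, not_nonempty_iff_eq_empty] at hno
  choose C hC hBC using hno
  obtain ⟨x, hxB, hxC⟩ := hB _ (clubIn_iInter hΛ hι hC)
  obtain ⟨i, hi⟩ := mem_iUnion.1 hxB
  exact (eq_empty_iff_forall_notMem.1 (hBC i)) x ⟨hi, mem_iInter.1 hxC i⟩

end Clubs

variable {lam : Cardinal.{u}}

instance : Nonempty (Target lam) :=
  ⟨⟨0, Cardinal.ord_pos.2 (Cardinal.power_pos lam two_pos)⟩⟩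

lemma mk_target : #(Target lam) = Cardinal.lift.{u + 1} (2 ^ lam) := by
  have := Cardinal.mk_Iio_ordinal ((2 : Cardinal.{u}) ^ lam).ord
  rwa [Cardinal.card_ord] at this

lemma mk_pi_target_le (hinf : ℵ₀ ≤ lam) {ι : Type u} (hι : #ι ≤ lam) :
    #(ι → Target lam) ≤ #(Target lam) := by
  rw [Cardinal.mk_arrow, mk_target, Cardinal.lift_lift, ← Cardinal.lift_power,
    ← Cardinal.power_mul, Cardinal.lift_le]
  calc (2 : Cardinal.{u}) ^ (lam * #ι) ≤ 2 ^ (lam * lam) :=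
        Cardinal.power_le_power_left two_ne_zero (mul_le_mul_right hι lam)
    _ = 2 ^ lam := by rw [Cardinal.mul_eq_self hinf]

def PSeq.map (φ : Target lam → Target lam) (p : PSeq lam) : PSeq lam :=
  ⟨p.1, φ ∘ p.2⟩

lemma PSeq.map_restr (φ : Target lam → Target lam) (f : Tower lam → Target lam)
    (α : Tower lam) : (restr lam f α).map φ = restr lam (φ ∘ f) α :=
  rfl

lemma WeakDiamond.mono {k : ℕ} {S T : Set Ordinal.{u}} (h : S ⊆ T)
    (hS : WeakDiamond lam k S) : WeakDiamond lam k T := fun F =>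
  (hS F).imp fun _ hg f => (hg f).mono fun _ hα => ⟨hα.1, h hα.2.1, hα.2.2⟩

lemma WeakDiamond.statIn {k : ℕ} [NeZero k] {S : Set Ordinal.{u}} (hS : WeakDiamond lam k S) :
    StatIn S (Order.succ lam).ord := by
  obtain ⟨g, hg⟩ := hS fun _ => 0
  exact (hg fun _ => Classical.arbitrary _).mono fun _ hα => hα.2.1

lemma WeakDiamond.exists_of_iUnion (hinf : ℵ₀ ≤ lam) {ι : Type u} (hι : #ι ≤ lam)
    {S : ι → Set Ordinal.{u}} (h : WeakDiamond lam 2 (⋃ i, S i)) :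
    ∃ i, WeakDiamond lam 2 (S i) := by
  have hcof : (Order.succ lam).ord.cof = Order.succ lam := (isRegular_succ hinf).cof_ord
  obtain ⟨x, hx⟩ := h.statIn.nonempty
  have : Nonempty ι := ⟨(mem_iUnion.1 hx).choose⟩
  by_contra! hbad
  simp only [WeakDiamond, not_forall, not_exists] at hbad
  choose F hF using hbad
  obtain ⟨enc⟩ : Nonempty ((ι → Target lam) ↪ Target lam) :=
    Cardinal.le_def _ _ |>.1 (mk_pi_target_le hinf hι)
  set dec := invFun enc
  set sel : Ordinal.{u} → ι := fun α => Classical.epsilon fun i => α ∈ S i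
  obtain ⟨g, hg⟩ := h fun p => F (sel p.1.1) (p.map fun y => dec y (sel p.1.1))
  choose f hf using fun i => hF i g
  set fCode : Tower lam → Target lam := fun β => enc fun i => f i β
  have hdec : ∀ i, (fun y => dec y i) ∘ fCode = f i := fun i =>
    funext fun β => congrFun (leftInverse_invFun enc.injective _) i
  have hstat : StatIn (⋃ i, {α : Ordinal.{u} | ∃ hα : α < (Order.succ lam).ord,
      α ∈ S i ∧ F i (restr lam (f i) ⟨α, hα⟩) = g ⟨α, hα⟩}) (Order.succ lam).ord := by
    refine (hg fCode).mono ?_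
    rintro α ⟨hα, hαS, heq⟩
    have hsel : α ∈ S (sel α) := Classical.epsilon_spec (mem_iUnion.1 hαS)
    exact mem_iUnion.2 ⟨sel α, hα, hsel, by rw [← heq, ← hdec (sel α)]; rfl⟩
  obtain ⟨i, hi⟩ := hstat.exists_of_iUnion (by rw [hcof]; exact Order.lt_succ_of_le hinf)
    (by rw [hcof]; exact Order.lt_succ_of_le hι)
  exact hf i hi

lemma WeakDiamond.diff (hinf : ℵ₀ ≤ lam) {S T : Set Ordinal.{u}} (hS : WeakDiamond lam 2 S)
    (hT : ¬ StatIn T (Order.succ lam).ord) : WeakDiamond lam 2 (S \ T) := by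
  have hcover : S ⊆ ⋃ b : ULift.{u} Bool, cond b.down (S \ T) T := fun x hx =>
    mem_iUnion.2 ((em (x ∈ T)).elim (fun hxT => ⟨⟨false⟩, hxT⟩) fun hxT => ⟨⟨true⟩, hx, hxT⟩)
  obtain ⟨⟨b⟩, hb⟩ := (hS.mono hcover).exists_of_iUnion hinf
    (by simpa using (Cardinal.natCast_lt_aleph0 (n := 2)).le.trans hinf)
  cases b
  · exact absurd hb.statIn hT
  · exact hb

lemma WeakDiamond.Ioo (hinf : ℵ₀ ≤ lam) (h : WeakDiamond lam 2 (Iio (Order.succ lam).ord))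
    {α : Ordinal.{u}} (hα : α < (Order.succ lam).ord) :
    WeakDiamond lam 2 (Ioo α (Order.succ lam).ord) := by
  have hIic : ¬ StatIn (Iic α) (Order.succ lam).ord := fun hstat => by
    obtain ⟨x, hxα, hαx⟩ :=
      hstat _ (clubIn_Ioo (Cardinal.isSuccLimit_ord (hinf.trans (Order.le_succ lam))) hα)
    exact hαx.1.not_ge hxα
  convert h.diff hinf hIic using 1
  ext x
  simp

lemma exists_ulam_matrix {ι : Type u} (hι : lam ≤ #ι) :
    ∃ A : ι → Ordinal.{u} → Set Ordinal.{u},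
      (∀ α, ⋃ ξ, A ξ α = Ioo α (Order.succ lam).ord) ∧ ∀ ξ, Pairwise (Disjoint on A ξ) := by
  have hemb : ∀ β : Tower lam, Nonempty (Iio β.1 ↪ ι) := fun β => by
    rw [← Cardinal.lift_mk_le'.{u + 1, u}, Cardinal.mk_Iio_ordinal, Cardinal.lift_lift,
      Cardinal.lift_le]
    exact (Order.lt_succ_iff.1 (Cardinal.lt_ord.1 β.2)).trans hι
  have e := fun β => Classical.choice (hemb β)
  refine ⟨fun ξ α => {β | ∃ hβ : β < (Order.succ lam).ord, ∃ hαβ : α < β,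
    e ⟨β, hβ⟩ ⟨α, hαβ⟩ = ξ}, fun α => ?_, fun ξ α α' hne => ?_⟩
  · ext β
    simp only [mem_iUnion, mem_ofPred_eq, mem_Ioo]
    constructor
    · rintro ⟨ξ, hβ, hαβ, -⟩
      exact ⟨hαβ, hβ⟩
    · rintro ⟨hαβ, hβ⟩
      exact ⟨_, hβ, hαβ, rfl⟩
  · rw [onFun, Set.disjoint_left]
    rintro β ⟨hβ, hαβ, h⟩ ⟨_, _, h'⟩
    exact hne (congrArg Subtype.val ((e _).injective (h.trans h'.symm)))

lemma exists_injOn_fiber (hinf : ℵ₀ ≤ lam) {ι : Type u} (hι : #ι ≤ lam)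
    (f : Ordinal.{u} → ι) : ∃ ξ, ∃ j : Ordinal.{u} → Ordinal.{u},
      InjOn j (Iio (Order.succ lam).ord) ∧
      ∀ α < (Order.succ lam).ord, j α < (Order.succ lam).ord ∧ f (j α) = ξ := by
  have hcard : #(Iio (Order.succ lam).ord) = Cardinal.lift.{u + 1} (Order.succ lam) := by
    rw [Cardinal.mk_Iio_ordinal, Cardinal.card_ord]
  obtain ⟨⟨ξ⟩, t, ht, htcard, hft⟩ := Cardinal.infinite_pigeonhole_set
    (fun α : Iio (Order.succ lam).ord => ULift.up.{u + 1} (f α)) _ le_rfl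
    (by rw [hcard, ← Cardinal.lift_aleph0.{u + 1, u}, Cardinal.lift_le]
        exact hinf.trans (Order.le_succ lam))
    (by rw [hcard, (isRegular_succ hinf).lift.cof_ord, Cardinal.mk_uLift, Cardinal.lift_lt]
        exact Order.lt_succ_of_le hι)
  obtain ⟨emb⟩ := (Cardinal.le_def _ _).1 htcard
  refine ⟨ξ, fun α => if h : α ∈ Iio (Order.succ lam).ord then (emb ⟨α, h⟩).1 else α,
    fun α hα β hβ h => ?_, fun α hα => ?_⟩
  · simp only [dif_pos hα, dif_pos hβ] at h
    exact congrArg Subtype.val (emb.injective (Subtype.ext h))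
  · dsimp only
    rw [dif_pos (mem_Iio.2 hα)]
    exact ⟨ht (emb _).2, congrArg ULift.down (hft (emb _).2)⟩

end WD

/-- If `Φ²_{λ⁺}(λ⁺)` holds, then there are pairwise disjoint stationary sets
`S_α ⊆ λ⁺` for `α < λ⁺` such that `Φ²_{λ⁺}(S_α)` holds for every `α < λ⁺`. -/
theorem stmt7 (lam : Cardinal.{u}) (hinf : ℵ₀ ≤ lam)
    (hwd : WD.WeakDiamond lam 2 (Set.Iio (Order.succ lam).ord)) :
    ∃ S : Ordinal.{u} → Set Ordinal.{u},
      (∀ α < (Order.succ lam).ord, ∀ x ∈ S α, x < (Order.succ lam).ord) ∧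
      (∀ α < (Order.succ lam).ord, WD.StatIn (S α) (Order.succ lam).ord) ∧
      (∀ α < (Order.succ lam).ord, ∀ β < (Order.succ lam).ord,
        α ≠ β → Disjoint (S α) (S β)) ∧
      (∀ α < (Order.succ lam).ord, WD.WeakDiamond lam 2 (S α)) := by
  have : Nonempty lam.out := Cardinal.mk_ne_zero_iff.1 <| by
    rw [Cardinal.mk_out]; exact (aleph0_pos.trans_le hinf).ne'
  obtain ⟨A, hA_iUnion, hA_disjoint⟩ := WD.exists_ulam_matrix (Cardinal.mk_out lam).ge
  have hrow : ∀ α < (Order.succ lam).ord, ∃ ξ, WD.WeakDiamond lam 2 (A ξ α) := fun α hα =>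
    ((hwd.Ioo hinf hα).mono (hA_iUnion α).ge).exists_of_iUnion hinf (Cardinal.mk_out lam).le
  choose! ξ hξ using hrow
  obtain ⟨ξ₀, j, hj_inj, hj⟩ := WD.exists_injOn_fiber hinf (Cardinal.mk_out lam).le ξ
  have hS : ∀ α < (Order.succ lam).ord, WD.WeakDiamond lam 2 (A ξ₀ (j α)) := fun α hα =>
    (hj α hα).2 ▸ hξ _ (hj α hα).1
  refine ⟨fun α => A ξ₀ (j α), fun α _ x hx => ?_, fun α hα => (hS α hα).statIn,
    fun α hα β hβ hne => hA_disjoint ξ₀ fun h => hne (hj_inj hα hβ h), hS⟩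
  have hx' : x ∈ Ioo (j α) (Order.succ lam).ord := hA_iUnion _ ▸ mem_iUnion_of_mem ξ₀ hx
  exact hx'.2
end
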